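/- Let μ > 0, λ ∈ ℝ with λ + 2μ > 0, κ > 0, R > 0, and let m ≥ 2 be an integer. For ε ∈ (0, 1/2) consider the model narrow region Ω_R := {(x₁, x₂) ∈ ℝ² : |x₁| < R, −ε/2 − (κ/2)|x₁|^m < x₂ < ε/2 + (κ/2)|x₁|^m}, with δ(x₁) := ε + κ|x₁|^m and ū(x₁, x₂) := (x₂ + ε/2 + (κ/2)|x₁|^m)/δ(x₁). Let ψ₃(x) := (x₂, −x₁)ᵀ be the rotational rigid displacement, and define the elastic energy density W_{λ,μ}(v) := λ(∂₁v¹ + ∂₂v²)² + μ[2(∂₁v¹)² + (∂₂v¹ + ∂₁v²)² + 2(∂₂v²)²]. Then there exists a constant C > 0, depending only on λ, μ, κ, m, R and not on ε, such that for all ε ∈ (0, 1/2): |∫_{Ω_R} W_{λ,μ}(ū·ψ₃) dx − (λ+2μ)·∫_{−R}^{R} x₁²/δ(x₁) dx₁| ≤ C. -/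

import Mathlib

open MeasureTheory intervalIntegral

/-- Partial derivative in the first variable of a function of two real variables. -/
noncomputable def pd1 (g : ℝ → ℝ → ℝ) (x y : ℝ) : ℝ := deriv (fun s => g s y) x

/-- Partial derivative in the second variable of a function of two real variables. -/
noncomputable def pd2 (g : ℝ → ℝ → ℝ) (x y : ℝ) : ℝ := deriv (fun s => g x s) y

/-- Isotropic elastic energy density
`W_{λ,μ}(v) = λ(∂₁v¹+∂₂v²)² + μ[2(∂₁v¹)² + (∂₂v¹+∂₁v²)² + 2(∂₂v²)²]`
of a planar vector field `v = (v¹, v²)`. -/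
noncomputable def W2 (lam mu : ℝ) (v1 v2 : ℝ → ℝ → ℝ) (x y : ℝ) : ℝ :=
  lam * (pd1 v1 x y + pd2 v2 x y) ^ 2 +
    mu * (2 * (pd1 v1 x y) ^ 2 + (pd2 v1 x y + pd1 v2 x y) ^ 2 + 2 * (pd2 v2 x y) ^ 2)

/-!
For fixed `x₁` the field `ū ψ₃` is polynomial in `x₂`, so its energy density is an even quartic
in `x₂` and can be integrated exactly over the fibre `|x₂| < δ/2`: the constant term contributes
`(λ+2μ) x₁²/δ`, and what remains is a combination of `δ'²δ`, `x₁δ'`, `δ` and `(x₁δ')²/δ`.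
For `δ = ε + κ|x₁|^m` each of these is bounded uniformly in `ε`, the last one because
`x₁δ'(x₁) = mκ|x₁|^m ≤ m δ(x₁)`. Fubini over the region between the graphs of `±δ/2` assembles
the fibres.
-/

open Set

theorem setIntegral_regionBetween {α E : Type*} [MeasurableSpace α] [NormedAddCommGroup E]
    [NormedSpace ℝ E] {μ : Measure α} [SFinite μ] {f g : α → ℝ} {s : Set α}
    (hf : Measurable f) (hg : Measurable g) (hs : MeasurableSet s) {F : α × ℝ → E}
    (hF : IntegrableOn F (regionBetween f g s) (μ.prod volume)) :
    ∫ p in regionBetween f g s, F p ∂(μ.prod volume) =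
      ∫ x in s, (∫ y in Ioo (f x) (g x), F (x, y)) ∂μ := by
  have hreg := measurableSet_regionBetween hf hg hs
  rw [← MeasureTheory.integral_indicator hreg,
    integral_prod _ ((integrable_indicator_iff hreg).2 hF), ← MeasureTheory.integral_indicator hs]
  congr 1 with x
  by_cases hx : x ∈ s
  · rw [indicator_of_mem hx, ← MeasureTheory.integral_indicator measurableSet_Ioo]
    congr 1 with y
    simp only [indicator, regionBetween, mem_ofPred_eq, hx, true_and]
  · simp [indicator, regionBetween, hx]

theorem integrableOn_regionBetween_Icc {E : Type*} [NormedAddCommGroup E] {F : ℝ × ℝ → E}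
    (hF : Continuous F) {f g : ℝ → ℝ} {a b : ℝ} (hf : ContinuousOn f (Icc a b))
    (hg : ContinuousOn g (Icc a b)) : IntegrableOn F (regionBetween f g (Icc a b)) := by
  obtain ⟨Cf, hCf⟩ := isCompact_Icc.exists_bound_of_continuousOn hf
  obtain ⟨Cg, hCg⟩ := isCompact_Icc.exists_bound_of_continuousOn hg
  have hK : IsCompact (Icc a b ×ˢ Icc (-Cf) Cg) := isCompact_Icc.prod isCompact_Icc
  refine (hF.continuousOn.integrableOn_compact hK).mono_set ?_
  rintro ⟨x, y⟩ ⟨hx, hfy, hgy⟩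
  refine ⟨hx, ?_, ?_⟩
  · linarith [neg_abs_le (f x), (Real.norm_eq_abs _ ▸ hCf x hx : |f x| ≤ Cf)]
  · linarith [le_abs_self (g x), (Real.norm_eq_abs _ ▸ hCg x hx : |g x| ≤ Cg)]

theorem integral_symm_quartic (a b c h : ℝ) :
    ∫ t in -h..h, (a * t ^ 4 + b * t ^ 2 + c) = 2 * (a * h ^ 5 / 5 + b * h ^ 3 / 3 + c * h) := by
  have hq : IntervalIntegrable (fun t : ℝ => a * t ^ 4) volume (-h) h :=
    (continuous_const.mul (continuous_pow 4)).intervalIntegrable _ _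
  have hs : IntervalIntegrable (fun t : ℝ => b * t ^ 2) volume (-h) h :=
    (continuous_const.mul (continuous_pow 2)).intervalIntegrable _ _
  rw [integral_add (hq.add hs) intervalIntegrable_const, integral_add hq hs,
    intervalIntegral.integral_const_mul, intervalIntegral.integral_const_mul, integral_pow,
    integral_pow, intervalIntegral.integral_const, smul_eq_mul]
  ring

theorem hasDerivAt_abs_pow {m : ℕ} (hm : 2 ≤ m) (x : ℝ) :
    HasDerivAt (fun x : ℝ => |x| ^ m) (m * |x| ^ (m - 2) * x) x := by
  have h := hasDerivAt_abs_rpow x (p := m) (by exact_mod_cast hm)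
  simp only [Real.rpow_natCast] at h
  rwa [← Nat.cast_ofNat, ← Nat.cast_sub hm, Real.rpow_natCast] at h

/-- The paper's `ū` for the fibres `|t| < δ(s)/2`. -/
noncomputable def fibreInterpolant (δ : ℝ → ℝ) (s t : ℝ) : ℝ := (t + δ s / 2) / δ s

theorem W2_rotation_eq_quartic {δ : ℝ → ℝ} {d' s : ℝ} (hδ : HasDerivAt δ d' s) (hδs : δ s ≠ 0)
    (lam mu t : ℝ) :
    W2 lam mu (fun s t => fibreInterpolant δ s t * t) (fun s t => -(fibreInterpolant δ s t * s))
        s t =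
      (lam + 2 * mu) * d' ^ 2 / δ s ^ 4 * t ^ 4
        + (2 * lam * s * d' / δ s ^ 3 + mu * (1 / δ s + s * d' / δ s ^ 2) ^ 2) * t ^ 2
        + (lam + 2 * mu) * s ^ 2 / δ s ^ 2 := by
  have hū₁ : HasDerivAt (fun s => fibreInterpolant δ s t) (-(t * d') / δ s ^ 2) s :=
    (((hδ.div_const 2).const_add t).div hδ hδs).congr_deriv (by field_simp; ring)
  have hū₂ : HasDerivAt (fun t => fibreInterpolant δ s t) (1 / δ s) t :=
    ((hasDerivAt_id t).add_const (δ s / 2)).div_const (δ s)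
  have h11 : HasDerivAt (fun s => fibreInterpolant δ s t * t) _ s := hū₁.mul_const t
  have h21 : HasDerivAt (fun s => -(fibreInterpolant δ s t * s)) _ s :=
    (hū₁.mul (hasDerivAt_id' s)).neg
  have h12 : HasDerivAt (fun t => fibreInterpolant δ s t * t) _ t := hū₂.mul (hasDerivAt_id' t)
  have h22 : HasDerivAt (fun t => -(fibreInterpolant δ s t * s)) _ t := (hū₂.mul_const s).neg
  simp only [W2, pd1, pd2, h11.deriv, h21.deriv, h12.deriv, h22.deriv]
  unfold fibreInterpolant
  field_simp
  ring

noncomputable def rotationFibreError (lam mu d d' s : ℝ) : ℝ :=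
  lam * (d' ^ 2 * d / 80 + s * d' / 6) +
    mu * (d' ^ 2 * d / 40 + d / 12 + s * d' / 6 + (s * d') ^ 2 / (12 * d))

theorem integral_W2_rotation_fibre {δ : ℝ → ℝ} {d' s : ℝ} (hδ : HasDerivAt δ d' s)
    (hδs : δ s ≠ 0) (lam mu : ℝ) :
    ∫ t in -(δ s / 2)..δ s / 2, W2 lam mu (fun s t => fibreInterpolant δ s t * t)
        (fun s t => -(fibreInterpolant δ s t * s)) s t =
      (lam + 2 * mu) * (s ^ 2 / δ s) + rotationFibreError lam mu (δ s) d' s := by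
  simp only [W2_rotation_eq_quartic hδ hδs, integral_symm_quartic, rotationFibreError]
  field_simp
  ring

theorem integral_W2_rotation_regionBetween {δ δ' : ℝ → ℝ} (hδ : ∀ s, HasDerivAt δ (δ' s) s)
    (hδ' : Continuous δ') (hδ_pos : ∀ s, 0 < δ s) (lam mu : ℝ) {a b : ℝ} (hab : a ≤ b) :
    ∫ p in regionBetween (fun s => -(δ s / 2)) (fun s => δ s / 2) (Ioo a b),
        W2 lam mu (fun s t => fibreInterpolant δ s t * t)
          (fun s t => -(fibreInterpolant δ s t * s)) p.1 p.2 =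
      (lam + 2 * mu) * (∫ s in a..b, s ^ 2 / δ s) +
        ∫ s in a..b, rotationFibreError lam mu (δ s) (δ' s) s := by
  have hδc : Continuous δ := continuous_iff_continuousAt.2 fun s => (hδ s).continuousAt
  have hδ0 : ∀ s, δ s ≠ 0 := fun s => (hδ_pos s).ne'
  have hWc : Continuous fun p : ℝ × ℝ => W2 lam mu (fun s t => fibreInterpolant δ s t * t)
      (fun s t => -(fibreInterpolant δ s t * s)) p.1 p.2 := by
    simp only [W2_rotation_eq_quartic (hδ _) (hδ0 _)]
    fun_prop (disch := simp [hδ0])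
  have hlower : Continuous fun s => -(δ s / 2) := by fun_prop
  have hupper : Continuous fun s => δ s / 2 := by fun_prop
  have hint : IntegrableOn _ (regionBetween (fun s => -(δ s / 2)) (fun s => δ s / 2) (Ioo a b)) :=
    (integrableOn_regionBetween_Icc hWc hlower.continuousOn hupper.continuousOn).mono_set
      fun p hp => ⟨Ioo_subset_Icc_self hp.1, hp.2⟩
  have hfibre (s : ℝ) : ∫ t in Ioo (-(δ s / 2)) (δ s / 2), W2 lam mu
      (fun s t => fibreInterpolant δ s t * t) (fun s t => -(fibreInterpolant δ s t * s)) s t =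
      (lam + 2 * mu) * (s ^ 2 / δ s) + rotationFibreError lam mu (δ s) (δ' s) s := by
    rw [← integral_Ioc_eq_integral_Ioo, ← integral_of_le (by linarith [hδ_pos s]),
      integral_W2_rotation_fibre (hδ s) (hδ0 s)]
  have hErr : Continuous fun s => rotationFibreError lam mu (δ s) (δ' s) s := by
    unfold rotationFibreError
    fun_prop (disch := simp [hδ0])
  rw [Measure.volume_eq_prod, setIntegral_regionBetween hlower.measurable hupper.measurable
    measurableSet_Ioo hint]
  simp only [hfibre]
  rw [← integral_Ioc_eq_integral_Ioo, ← integral_of_le hab, intervalIntegral.integral_add,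
    intervalIntegral.integral_const_mul]
  · exact (continuous_const.mul ((continuous_pow 2).div hδc hδ0)).intervalIntegrable _ _
  · exact hErr.intervalIntegrable _ _

theorem abs_rotationFibreError_le {lam mu d d' s D K Q c : ℝ} (hmu : 0 ≤ mu) (hd : 0 < d)
    (hdD : d ≤ D) (hd'K : |d'| ≤ K) (hQ : |s * d'| ≤ Q) (hc : |s * d'| ≤ c * d) :
    |rotationFibreError lam mu d d' s| ≤
      (|lam| + mu) * (K ^ 2 * D / 40 + D / 12 + Q / 6 + c * Q / 12) := by
  set E := d' ^ 2 * d / 40 + d / 12 + |s * d'| / 6 + (s * d') ^ 2 / (12 * d) with hE_def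
  have hA : 0 ≤ d' ^ 2 * d := by positivity
  have hB : 0 ≤ (s * d') ^ 2 / (12 * d) := by positivity
  have hq₁ := neg_abs_le (s * d')
  have hq₂ := le_abs_self (s * d')
  have hlam_term : |d' ^ 2 * d / 80 + s * d' / 6| ≤ E := by
    rw [abs_le]; constructor <;> linarith [hd.le]
  have hmu_term : |d' ^ 2 * d / 40 + d / 12 + s * d' / 6 + (s * d') ^ 2 / (12 * d)| ≤ E := by
    rw [abs_le]; constructor <;> linarith [hd.le]
  have hE : E ≤ K ^ 2 * D / 40 + D / 12 + Q / 6 + c * Q / 12 := by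
    have hK : d' ^ 2 * d ≤ K ^ 2 * D := by
      have hK2 : d' ^ 2 ≤ K ^ 2 := sq_le_sq' (abs_le.1 hd'K).1 (abs_le.1 hd'K).2
      exact mul_le_mul hK2 hdD hd.le ((sq_nonneg d').trans hK2)
    have hsq : (s * d') ^ 2 / (12 * d) ≤ c * Q / 12 := by
      rw [div_le_div_iff₀ (by positivity) (by norm_num), ← sq_abs]
      nlinarith [abs_nonneg (s * d')]
    linarith [hdD]
  calc |rotationFibreError lam mu d d' s|
      ≤ |lam| * E + mu * E := by
        unfold rotationFibreError
        refine (abs_add_le _ _).trans ?_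
        rw [abs_mul, abs_mul, abs_of_nonneg hmu]
        gcongr
    _ = (|lam| + mu) * E := by ring
    _ ≤ _ := by gcongr

theorem exists_abs_rotationFibreError_le_of_abs_pow (lam : ℝ) {mu κ : ℝ} (hmu : 0 ≤ mu)
    (hκ : 0 < κ) {m : ℕ} (hm : 2 ≤ m) (R : ℝ) :
    ∃ C, ∀ ε, 0 < ε → ε ≤ 1 / 2 → ∀ s, |s| ≤ R →
      |rotationFibreError lam mu (ε + κ * |s| ^ m) (κ * (m * |s| ^ (m - 2) * s)) s| ≤ C := by
  refine ⟨?C, fun ε hε hε2 s hs => ?_⟩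
  swap
  have hsd : s * (κ * (m * |s| ^ (m - 2) * s)) = m * (κ * |s| ^ m) := by
    rw [show |s| ^ m = |s| ^ (m - 2) * (|s| * |s|) by
      rw [← pow_two, ← pow_add, Nat.sub_add_cancel hm], abs_mul_abs_self]
    ring
  have hd' : |κ * (m * |s| ^ (m - 2) * s)| = κ * m * |s| ^ (m - 1) := by
    rw [abs_mul, abs_mul, abs_mul, abs_of_pos hκ, Nat.abs_cast, abs_pow, abs_abs,
      show m - 1 = m - 2 + 1 by omega, pow_succ]
    ring
  have hsR : |s| ^ m ≤ R ^ m := pow_le_pow_left₀ (abs_nonneg s) hs m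
  refine abs_rotationFibreError_le (D := 1 / 2 + κ * R ^ m) (K := κ * m * R ^ (m - 1))
    (Q := m * (κ * R ^ m)) (c := m) hmu ?_ ?_ ?_ ?_ ?_
  · positivity
  · gcongr
  · rw [hd']
    gcongr
  · rw [hsd, abs_of_nonneg (by positivity)]
    gcongr
  · rw [hsd, abs_of_nonneg (by positivity)]
    gcongr
    linarith

theorem stmt19_general (lam mu κ R : ℝ) (m : ℕ) (hmu : 0 < mu)
    (hκ : 0 < κ) (hR : 0 < R) (hm : 2 ≤ m) :
    ∃ C > 0, ∀ ε : ℝ, 0 < ε → ε < 1 / 2 →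
      (let δ : ℝ → ℝ := fun s => ε + κ * |s| ^ m
       let ub : ℝ → ℝ → ℝ := fun s t => (t + ε / 2 + κ / 2 * |s| ^ m) / δ s
       let Ω : Set (ℝ × ℝ) := {p : ℝ × ℝ | |p.1| < R ∧
         -ε / 2 - κ / 2 * |p.1| ^ m < p.2 ∧ p.2 < ε / 2 + κ / 2 * |p.1| ^ m}
       let v1 : ℝ → ℝ → ℝ := fun s t => ub s t * t
       let v2 : ℝ → ℝ → ℝ := fun s t => -(ub s t * s)
       |(∫ p in Ω, W2 lam mu v1 v2 p.1 p.2) -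
           (lam + 2 * mu) * ∫ x₁ in (-R)..R, x₁ ^ 2 / δ x₁| ≤ C) := by
  obtain ⟨C, hC⟩ := exists_abs_rotationFibreError_le_of_abs_pow lam hmu.le hκ hm R
  refine ⟨max C 1 * (2 * R), by positivity, fun ε hε hε2 => ?_⟩
  intro δ ub Ω v1 v2
  have hδ (s : ℝ) : HasDerivAt δ (κ * (m * |s| ^ (m - 2) * s)) s :=
    ((hasDerivAt_abs_pow hm s).const_mul κ).const_add ε
  have hΩ : Ω = regionBetween (fun s => -(δ s / 2)) (fun s => δ s / 2) (Ioo (-R) R) := by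
    ext p
    simp only [Ω, δ, regionBetween, mem_ofPred_eq, mem_Ioo, abs_lt]
    constructor <;> rintro ⟨h₁, h₂, h₃⟩ <;> exact ⟨h₁, by linarith, by linarith⟩
  have hub : ∀ s t, ub s t = fibreInterpolant δ s t := fun s t => by
    simp only [ub, fibreInterpolant, δ]
    ring
  have hv₁ : v1 = fun s t => fibreInterpolant δ s t * t := by simp only [v1, hub]
  have hv₂ : v2 = fun s t => -(fibreInterpolant δ s t * s) := by simp only [v2, hub]
  rw [hΩ, hv₁, hv₂,
    integral_W2_rotation_regionBetween hδ (by fun_prop) (fun s => by positivity) lam mu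
      (by linarith), add_sub_cancel_left]
  have hbound : ∀ s ∈ uIoc (-R) R,
      ‖rotationFibreError lam mu (δ s) (κ * (m * |s| ^ (m - 2) * s)) s‖ ≤ max C 1 := by
    intro s hs
    rw [uIoc_of_le (by linarith)] at hs
    exact (hC ε hε hε2.le s (abs_le.2 ⟨hs.1.le, hs.2⟩)).trans (le_max_left _ _)
  calc _ ≤ max C 1 * |R - -R| := norm_integral_le_of_norm_le_const hbound
    _ = max C 1 * (2 * R) := by rw [abs_of_pos (by linarith)]; ring

/-- In the model narrow region with `δ(x₁) = ε + κ|x₁|^m`, the elastic energy of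
`ū·ψ₃`, where `ψ₃(x) = (x₂, −x₁)ᵀ` is the rotational rigid displacement, equals
`(λ+2μ)·∫_{−R}^{R} x₁²/δ(x₁) dx₁` up to an error bounded uniformly in `ε`. -/
theorem stmt19 (lam mu κ R : ℝ) (m : ℕ) (hmu : 0 < mu) (hlm : 0 < lam + 2 * mu)
    (hκ : 0 < κ) (hR : 0 < R) (hm : 2 ≤ m) :
    ∃ C > 0, ∀ ε : ℝ, 0 < ε → ε < 1 / 2 →
      (let δ : ℝ → ℝ := fun s => ε + κ * |s| ^ m
       let ub : ℝ → ℝ → ℝ := fun s t => (t + ε / 2 + κ / 2 * |s| ^ m) / δ s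
       let Ω : Set (ℝ × ℝ) := {p : ℝ × ℝ | |p.1| < R ∧
         -ε / 2 - κ / 2 * |p.1| ^ m < p.2 ∧ p.2 < ε / 2 + κ / 2 * |p.1| ^ m}
       let v1 : ℝ → ℝ → ℝ := fun s t => ub s t * t
       let v2 : ℝ → ℝ → ℝ := fun s t => -(ub s t * s)
       |(∫ p in Ω, W2 lam mu v1 v2 p.1 p.2) -
           (lam + 2 * mu) * ∫ x₁ in (-R)..R, x₁ ^ 2 / δ x₁| ≤ C) :=
  stmt19_general lam mu κ R m hmu hκ hR hm
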